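/- (Case 3) Let y₀ ∈ ℝ³, y₀ ≠ 0, and δ₀ ∈ ℝ, δ₀ ≠ 0. Then J⁻¹(0, δ₀y₀) ∩ M_{G²(y₀)} = {(λy₀, βy₀, γy₀, (δ₀−γ)y₀) : λ,β,γ ∈ ℝ}; in particular this set is path-connected. -/

import Mathlib

open Matrix

/-- Vectors in ℝ³. -/
abbrev V3 : Type := Fin 3 → ℝ

/-- The two-body phase space M = ℝ³ × ℝ³ × ℝ³ × ℝ³, points (q¹, q², p¹, p²). -/
abbrev M2B : Type := V3 × V3 × V3 × V3

/-- A 3×3 real matrix is special orthogonal. -/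
def SO3 (A : Matrix (Fin 3) (Fin 3) ℝ) : Prop := Aᵀ * A = 1 ∧ A.det = 1

/-- The action of (A, a) ∈ SE(3) on the phase space:
(A,a)·(q¹,q²,p¹,p²) = (Aq¹+a, Aq²+a, Ap¹, Ap²). -/
def act (A : Matrix (Fin 3) (Fin 3) ℝ) (a : V3) (m : M2B) : M2B :=
  (A *ᵥ m.1 + a, A *ᵥ m.2.1 + a, A *ᵥ m.2.2.1, A *ᵥ m.2.2.2)

/-- The isotropy subgroup SE(3)_{(q,p)} of a point of M, as a set of pairs (A,a)
with A special orthogonal. -/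
def isotropy (m : M2B) : Set (Matrix (Fin 3) (Fin 3) ℝ × V3) :=
  {g | SO3 g.1 ∧ act g.1 g.2 m = m}

/-- The momentum map J(q¹,q²,p¹,p²) = (q¹×p¹ + q²×p², p¹+p²). -/
def Jmom (m : M2B) : V3 × V3 :=
  (m.1 ⨯₃ m.2.2.1 + m.2.1 ⨯₃ m.2.2.2, m.2.2.1 + m.2.2.2)

/-- G¹(x) = {(A,a) ∈ SE(3) : a = x − Ax}. -/
def G1 (x : V3) : Set (Matrix (Fin 3) (Fin 3) ℝ × V3) :=
  {g | SO3 g.1 ∧ g.2 = x - g.1 *ᵥ x}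

/-- G²(y) = {(A,0) ∈ SE(3) : Ay = y}. -/
def G2 (y : V3) : Set (Matrix (Fin 3) (Fin 3) ℝ × V3) :=
  {g | SO3 g.1 ∧ g.1 *ᵥ y = y ∧ g.2 = 0}

/-- G³(x,y) = {(A,a) ∈ SE(3) : Ay = y and a = x − Ax}. -/
def G3 (x y : V3) : Set (Matrix (Fin 3) (Fin 3) ℝ × V3) :=
  {g | SO3 g.1 ∧ g.1 *ᵥ y = y ∧ g.2 = x - g.1 *ᵥ x}

/-- G⁴ = {(I, 0)}, the trivial subgroup. -/
def G4 : Set (Matrix (Fin 3) (Fin 3) ℝ × V3) := {((1 : Matrix (Fin 3) (Fin 3) ℝ), (0 : V3))}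


/-!
The half-turn about `y₀` lies in `G²(y₀)`, so a point with isotropy group `G²(y₀)` is fixed by it,
and its fixed vectors are exactly the multiples of `y₀`: all four vectors of the point lie on the
line `ℝ y₀`, where every cross product vanishes. Conversely, on that line the total momentum
`δ₀ y₀ ≠ 0` forces one of the momenta to be a nonzero multiple of `y₀`, so an isometry fixing the
point must fix `y₀`, and fixing the positions then kills the translation. The resulting set is the
image of `ℝ³` under a continuous map, hence path-connected.
-/

namespace Matrix

variable {n : Type*} [Fintype n] [DecidableEq n]

/-- The rotation by `π` about the axis `y`. -/
noncomputable def halfTurn (y : n → ℝ) : Matrix n n ℝ :=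
  (2 / (y ⬝ᵥ y)) • vecMulVec y y - 1

theorem halfTurn_mulVec (y v : n → ℝ) :
    halfTurn y *ᵥ v = (2 * (y ⬝ᵥ v) / (y ⬝ᵥ y)) • y - v := by
  rw [halfTurn, sub_mulVec, smul_mulVec, vecMulVec_mulVec, one_mulVec, op_smul_eq_smul,
    smul_smul, div_mul_eq_mul_div]

theorem halfTurn_mulVec_self {y : n → ℝ} (hy : y ⬝ᵥ y ≠ 0) : halfTurn y *ᵥ y = y := by
  rw [halfTurn_mulVec, mul_div_assoc, div_self hy, mul_one, two_smul, add_sub_cancel_right]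

theorem exists_eq_smul_of_halfTurn_mulVec_eq {y v : n → ℝ} (h : halfTurn y *ᵥ v = v) :
    ∃ t : ℝ, v = t • y := by
  refine ⟨(y ⬝ᵥ v) / (y ⬝ᵥ y), ?_⟩
  rw [halfTurn_mulVec, sub_eq_iff_eq_add, ← two_smul ℝ v, mul_div_assoc, ← smul_smul] at h
  exact smul_right_injective _ two_ne_zero h.symm

theorem halfTurn_transpose (y : n → ℝ) : (halfTurn y)ᵀ = halfTurn y := by
  rw [halfTurn, transpose_sub, transpose_one, transpose_smul, transpose_vecMulVec]

theorem halfTurn_mul_self {y : n → ℝ} (hy : y ⬝ᵥ y ≠ 0) : halfTurn y * halfTurn y = 1 := by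
  refine ext_iff_mulVec.mpr fun v => ?_
  rw [← mulVec_mulVec, halfTurn_mulVec y v, mulVec_sub, mulVec_smul, halfTurn_mulVec_self hy,
    halfTurn_mulVec y v, sub_sub_cancel, one_mulVec]

/-- By the matrix determinant lemma, `det (1 - 2 y yᵀ / |y|²) = 1 - 2 = -1`. -/
theorem det_halfTurn {y : n → ℝ} (hy : y ⬝ᵥ y ≠ 0) :
    (halfTurn y).det = (-1) ^ (Fintype.card n + 1) := by
  rw [halfTurn, ← neg_sub, det_neg, sub_eq_add_neg, ← neg_smul, ← smul_vecMulVec,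
    vecMulVec_eq Unit, det_one_add_replicateCol_mul_replicateRow, dotProduct_smul, smul_eq_mul,
    neg_mul, div_mul_cancel₀ _ hy]
  ring

end Matrix

theorem halfTurn_mem_G2 {y : V3} (hy : y ≠ 0) : (halfTurn y, (0 : V3)) ∈ G2 y := by
  have hyy : y ⬝ᵥ y ≠ 0 := mt dotProduct_self_eq_zero.mp hy
  refine ⟨⟨?_, ?_⟩, halfTurn_mulVec_self hyy, rfl⟩
  · rw [halfTurn_transpose, halfTurn_mul_self hyy]
  · rw [det_halfTurn hyy]
    norm_num

theorem exists_smul_of_isotropy_eq_G2 {y : V3} (hy : y ≠ 0) {m : M2B} (hm : isotropy m = G2 y) :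
    ∃ l b c e : ℝ, m = (l • y, b • y, c • y, e • y) := by
  obtain ⟨q1, q2, p1, p2⟩ := m
  have hfix : act (halfTurn y) 0 (q1, q2, p1, p2) = (q1, q2, p1, p2) :=
    (hm ▸ halfTurn_mem_G2 hy : _ ∈ isotropy _).2
  simp only [act, add_zero, Prod.mk.injEq] at hfix
  obtain ⟨h1, h2, h3, h4⟩ := hfix
  obtain ⟨l, rfl⟩ := exists_eq_smul_of_halfTurn_mulVec_eq h1
  obtain ⟨b, rfl⟩ := exists_eq_smul_of_halfTurn_mulVec_eq h2
  obtain ⟨c, rfl⟩ := exists_eq_smul_of_halfTurn_mulVec_eq h3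
  obtain ⟨e, rfl⟩ := exists_eq_smul_of_halfTurn_mulVec_eq h4
  exact ⟨l, b, c, e, rfl⟩

theorem Jmom_smul (y : V3) (l b c e : ℝ) :
    Jmom (l • y, b • y, c • y, e • y) = (0, (c + e) • y) := by
  simp only [Jmom, map_smul, LinearMap.smul_apply, cross_self, smul_zero, add_zero, add_smul]

theorem isotropy_smul {y : V3} (l b : ℝ) {c e : ℝ} (hce : c ≠ 0 ∨ e ≠ 0) :
    isotropy (l • y, b • y, c • y, e • y) = G2 y := by
  ext ⟨A, a⟩
  simp only [isotropy, G2, act, Set.mem_ofPred_eq, Prod.mk.injEq, mulVec_smul]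
  constructor
  · rintro ⟨hA, hq1, -, hp1, hp2⟩
    have hAy : A *ᵥ y = y := by
      rcases hce with hc | he
      · exact smul_right_injective V3 hc hp1
      · exact smul_right_injective V3 he hp2
    rw [hAy, add_eq_left] at hq1
    exact ⟨hA, hAy, hq1⟩
  · rintro ⟨hA, hAy, rfl⟩
    simp only [hAy, add_zero, and_self, hA]

theorem setOf_Jmom_eq_and_isotropy_eq_G2 {y : V3} (hy : y ≠ 0) {d : ℝ} (hd : d ≠ 0) :
    {m : M2B | Jmom m = (0, d • y) ∧ isotropy m = G2 y} =
      Set.range fun t : ℝ × ℝ × ℝ => ((t.1 • y, t.2.1 • y, t.2.2 • y, (d - t.2.2) • y) : M2B) := by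
  ext m
  constructor
  · rintro ⟨hJ, hiso⟩
    obtain ⟨l, b, c, e, rfl⟩ := exists_smul_of_isotropy_eq_G2 hy hiso
    have hsum : c + e = d := smul_left_injective ℝ hy (congrArg Prod.snd (Jmom_smul .. ▸ hJ))
    exact ⟨(l, b, c), by simp only [← hsum, add_sub_cancel_left]⟩
  · rintro ⟨⟨l, b, c⟩, rfl⟩
    refine ⟨by rw [Jmom_smul, add_sub_cancel], isotropy_smul l b ?_⟩
    by_contra! h
    exact hd (by linarith [h.1, h.2])

/-- Case 3: J⁻¹(0, δ₀y₀) ∩ M_{G²(y₀)} has the stated parametrization and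
is path-connected. -/
theorem stmt10 (y0 : V3) (hy : y0 ≠ 0) (d0 : ℝ) (hd : d0 ≠ 0) :
    {m : M2B | Jmom m = (0, d0 • y0) ∧ isotropy m = G2 y0} =
      {m : M2B | ∃ l b c : ℝ, m = (l • y0, b • y0, c • y0, (d0 - c) • y0)} ∧
    IsPathConnected {m : M2B | Jmom m = (0, d0 • y0) ∧ isotropy m = G2 y0} := by
  rw [setOf_Jmom_eq_and_isotropy_eq_G2 hy hd]
  refine ⟨?_, isPathConnected_range (by fun_prop)⟩
  ext m
  simp only [Set.mem_range, Prod.exists, Set.mem_ofPred_eq, eq_comm]
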